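/- Let d ≥ 3 and w = 2^d, with pairs P_i ⊆ {1, ..., w} for i ∈ {1, ..., w/2} defined by P_i = {i, w/2 + 2i − 1} if 1 ≤ i ≤ w/4 and P_i = {i, 2i} if w/4 < i ≤ w/2, intervals I_{k,j} = {j·2^{d−k} + 1, ..., (j+1)·2^{d−k}}, and triggered sets T_{k,j} = { i ∈ {1, ..., w/2} : |P_i ∩ I_{k,j}| = 1 }. Then the map (k, j) ↦ T_{k,j} is injective on the domain {(k, j) : 2 ≤ k ≤ d − 1, 0 ≤ j < 2^k}: distinct tree nodes at depths between 2 and d − 1 trigger distinct sets of parity checks. -/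

import Mathlib

/-- The two-qubit parity-check pair `P_i ⊆ {1, …, w}`:
`P_i = {i, w/2 + 2i - 1}` if `1 ≤ i ≤ w/4`, and `P_i = {i, 2i}` if `w/4 < i ≤ w/2`. -/
def pairP (w i : ℕ) : Finset ℕ :=
  if i ≤ w / 4 then {i, w / 2 + 2 * i - 1} else {i, 2 * i}

/-- The interval of leaves `I_{k,j} = {j·2^(d-k) + 1, …, (j+1)·2^(d-k)}` affected by an
`X` fault at the `j`-th node of depth `k` in the binary tree. -/
def intervalI (d k j : ℕ) : Finset ℕ :=
  Finset.Icc (j * 2 ^ (d - k) + 1) ((j + 1) * 2 ^ (d - k))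

/-- `T_{k,j}`: the set of parity checks `i ∈ {1, …, w/2}` triggered by the fault at node
`(k, j)`, i.e. those whose pair `P_i` meets the interval `I_{k,j}` in exactly one element. -/
def triggered (w d k j : ℕ) : Finset ℕ :=
  (Finset.Icc 1 (w / 2)).filter (fun i => (pairP w i ∩ intervalI d k j).card = 1)

open Finset

/-!
Check `i ≤ w/2` joins leaf `i` of the left half of the leaves to the leaf `partner w i` of the
right half, and `i ↦ partner w i` is `i ↦ w/2 + 2i - 1` on `[1, w/4]` and `i ↦ 2i` on
`(w/4, w/2]`. Hence a node in the left half of the tree triggers exactly the checks indexed by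
its own leaves, an interval, while the node `(k, 2^(k-1) + t)` of the right half triggers the
union of the intervals of the nodes `(k, t)` and `(k, 2^(k-1) + t)` of the tree of depth `d - 1`.
For `k ≥ 2` these two intervals are separated by a gap, so a triggered set is never of both
kinds; an interval determines its node, and in the right half the part of the triggered set
below `w/4` determines the node.
-/

def partner (w i : ℕ) : ℕ :=
  if i ≤ w / 4 then w / 2 + 2 * i - 1 else 2 * i

theorem pairP_eq (w i : ℕ) : pairP w i = {i, partner w i} := by
  unfold pairP partner; split_ifs <;> rfl

theorem half_lt_partner (w : ℕ) {i : ℕ} (hi : 1 ≤ i) : w / 2 < partner w i := by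
  unfold partner; split_ifs <;> omega

section
variable {α : Type*} [DecidableEq α] {x y : α} {S : Finset α}

theorem card_pair_inter_eq_one_iff_left (hy : y ∉ S) : #({x, y} ∩ S) = 1 ↔ x ∈ S := by
  rw [insert_eq, union_inter_distrib_right, singleton_inter_of_notMem hy, union_empty]
  by_cases hx : x ∈ S <;> simp [hx]

theorem card_pair_inter_eq_one_iff_right (hx : x ∉ S) : #({x, y} ∩ S) = 1 ↔ y ∈ S := by
  rw [pair_comm, card_pair_inter_eq_one_iff_left hx]

end

def triggeredBy (w : ℕ) (S : Finset ℕ) : Finset ℕ :=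
  (Icc 1 (w / 2)).filter (fun i => #(pairP w i ∩ S) = 1)

theorem triggered_eq_triggeredBy (w d k j : ℕ) :
    triggered w d k j = triggeredBy w (intervalI d k j) := rfl

theorem triggeredBy_of_subset {w : ℕ} {S : Finset ℕ} (hS : S ⊆ Icc 1 (w / 2)) :
    triggeredBy w S = S := by
  have hpartner (i : ℕ) (hi : i ∈ Icc 1 (w / 2)) : partner w i ∉ S := fun h =>
    (half_lt_partner w (mem_Icc.1 hi).1).not_ge (mem_Icc.1 (hS h)).2
  rw [triggeredBy, filter_congr fun i hi => by
      rw [pairP_eq, card_pair_inter_eq_one_iff_left (hpartner i hi)],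
    filter_mem_eq_inter, inter_eq_right.2 hS]

theorem triggeredBy_of_disjoint {w : ℕ} {S : Finset ℕ} (hS : Disjoint S (Iic (w / 2))) :
    triggeredBy w S = (Icc 1 (w / 2)).filter (fun i => partner w i ∈ S) := by
  refine filter_congr fun i hi => ?_
  have hiS : i ∉ S := fun h => disjoint_left.1 hS h (mem_Iic.2 (mem_Icc.1 hi).2)
  rw [pairP_eq, card_pair_inter_eq_one_iff_right hiS]

theorem triggeredBy_Icc_right_half (q a L : ℕ) (h : a + L ≤ q) :
    triggeredBy (4 * q) (Icc (2 * q + 2 * a + 1) (2 * q + 2 * a + 2 * L)) =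
      Icc (a + 1) (a + L) ∪ Icc (q + a + 1) (q + a + L) := by
  rw [triggeredBy_of_disjoint (disjoint_left.2 fun i hi hi' => by
    simp only [mem_Icc, mem_Iic] at hi hi'; omega)]
  ext i
  simp only [mem_filter, mem_union, mem_Icc, partner]
  split_ifs <;> omega

theorem Icc_ne_Icc_union_Icc {a b c d e f : ℕ} (hcd : c ≤ d) (hde : d + 1 < e) (hef : e ≤ f) :
    Icc a b ≠ Icc c d ∪ Icc e f := by
  intro h
  have hd : d ∈ Icc a b := h ▸ mem_union_left _ (right_mem_Icc.2 hcd)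
  have he : e ∈ Icc a b := h ▸ mem_union_right _ (left_mem_Icc.2 hef)
  rw [mem_Icc] at hd he
  have hgap : d + 1 ∈ Icc c d ∪ Icc e f := h ▸ mem_Icc.2 ⟨by omega, by omega⟩
  simp only [mem_union, mem_Icc] at hgap
  omega

theorem intervalI_injective {d k k' j j' : ℕ} (hk : k ≤ d) (hk' : k' ≤ d)
    (h : intervalI d k j = intervalI d k' j') : k = k' ∧ j = j' := by
  have hL : 0 < 2 ^ (d - k) := by positivity
  rw [intervalI, intervalI, ← coe_inj, coe_Icc, coe_Icc,
    Set.Icc_eq_Icc_iff (by nlinarith), add_one_mul, add_one_mul] at h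
  have hkk : k = k' := by
    have := Nat.pow_right_injective le_rfl (show 2 ^ (d - k) = 2 ^ (d - k') by omega)
    omega
  subst hkk
  exact ⟨rfl, Nat.eq_of_mul_eq_mul_right hL (by omega)⟩

theorem two_pow_div_two_eq_mul {d k : ℕ} (hk : 1 ≤ k) (hkd : k ≤ d) :
    2 ^ d / 2 = 2 ^ (k - 1) * 2 ^ (d - k) := by
  rw [← pow_add, show k - 1 + (d - k) = d - 1 by omega]
  exact Nat.div_eq_of_eq_mul_left two_pos (by rw [← pow_succ]; congr 1; omega)

theorem intervalI_subset_Icc_half {d k j : ℕ} (hk : 1 ≤ k) (hkd : k ≤ d)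
    (hj : j < 2 ^ (k - 1)) : intervalI d k j ⊆ Icc 1 (2 ^ d / 2) := by
  rw [two_pow_div_two_eq_mul hk hkd]
  exact Icc_subset_Icc (by omega) (Nat.mul_le_mul_right _ hj)

theorem disjoint_intervalI_Iic_half {d k j : ℕ} (hk : 1 ≤ k) (hkd : k ≤ d)
    (hj : 2 ^ (k - 1) ≤ j) : Disjoint (intervalI d k j) (Iic (2 ^ d / 2)) := by
  rw [two_pow_div_two_eq_mul hk hkd, intervalI]
  have := Nat.mul_le_mul_right (2 ^ (d - k)) hj
  exact disjoint_left.2 fun i hi hi' => by simp only [mem_Icc, mem_Iic] at hi hi'; omega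

theorem triggered_of_lt {d k j : ℕ} (hk : 1 ≤ k) (hkd : k ≤ d) (hj : j < 2 ^ (k - 1)) :
    triggered (2 ^ d) d k j = intervalI d k j :=
  triggeredBy_of_subset (intervalI_subset_Icc_half hk hkd hj)

theorem triggered_of_le {d k j : ℕ} (hk : 1 ≤ k) (hkd : k < d) (hj : 2 ^ (k - 1) ≤ j)
    (hj' : j < 2 ^ k) :
    triggered (2 ^ d) d k j = intervalI (d - 1) k (j - 2 ^ (k - 1)) ∪ intervalI (d - 1) k j := by
  obtain ⟨t, rfl⟩ := Nat.exists_eq_add_of_le hj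
  set N := 2 ^ (k - 1)
  set L := 2 ^ (d - 1 - k)
  have hN : 2 * N = 2 ^ k := mul_pow_sub_one (by omega) 2
  have h2L : 2 ^ (d - k) = 2 * L := by rw [← pow_succ']; congr 1; omega
  have hw : 2 ^ d = 4 * (N * L) := by
    rw [← pow_add, show 4 = 2 ^ 2 by rfl, ← pow_add]; congr 1; omega
  have hbound : t * L + L ≤ N * L := by nlinarith
  rw [triggered_eq_triggeredBy, hw, Nat.add_sub_cancel_left]
  convert triggeredBy_Icc_right_half (N * L) (t * L) L hbound using 2 <;>
    simp only [intervalI, h2L] <;> congr 1 <;> ring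

theorem triggered_of_lt_ne_of_le {d k k' j j' : ℕ} (hk : 1 ≤ k) (hkd : k ≤ d)
    (hj : j < 2 ^ (k - 1)) (hk' : 2 ≤ k') (hkd' : k' < d) (hj₁' : 2 ^ (k' - 1) ≤ j')
    (hj₂' : j' < 2 ^ k') :
    triggered (2 ^ d) d k j ≠ triggered (2 ^ d) d k' j' := by
  rw [triggered_of_lt hk hkd hj, triggered_of_le (by omega) hkd' hj₁' hj₂']
  obtain ⟨t, rfl⟩ := Nat.exists_eq_add_of_le hj₁'
  have hN : 2 ≤ 2 ^ (k' - 1) := by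
    simpa using Nat.pow_le_pow_right two_pos (by omega : 1 ≤ k' - 1)
  have hL : 1 ≤ 2 ^ (d - 1 - k') := Nat.one_le_two_pow
  simp only [intervalI, Nat.add_sub_cancel_left]
  apply Icc_ne_Icc_union_Icc <;> nlinarith

theorem triggered_of_le_inter_Iic {d k j : ℕ} (hk : 1 ≤ k) (hkd : k < d)
    (hj₁ : 2 ^ (k - 1) ≤ j) (hj₂ : j < 2 ^ k) :
    triggered (2 ^ d) d k j ∩ Iic (2 ^ (d - 1) / 2) = intervalI (d - 1) k (j - 2 ^ (k - 1)) := by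
  have hpow := mul_pow_sub_one (by omega : k ≠ 0) 2
  rw [triggered_of_le hk hkd hj₁ hj₂, union_inter_distrib_right,
    disjoint_iff_inter_eq_empty.1 (disjoint_intervalI_Iic_half hk (by omega) hj₁), union_empty,
    inter_eq_left.2 ((intervalI_subset_Icc_half hk (by omega) (by omega)).trans
      Icc_subset_Iic_self)]

theorem triggered_injective_general (d : ℕ) (w : ℕ) (hw : w = 2 ^ d)
    (k j k' j' : ℕ)
    (hk1 : 2 ≤ k) (hk2 : k ≤ d - 1) (hj : j < 2 ^ k)
    (hk1' : 2 ≤ k') (hk2' : k' ≤ d - 1) (hj' : j' < 2 ^ k')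
    (heq : triggered w d k j = triggered w d k' j') :
    k = k' ∧ j = j' := by
  subst hw
  rcases lt_or_ge j (2 ^ (k - 1)) with hjl | hju <;>
    rcases lt_or_ge j' (2 ^ (k' - 1)) with hjl' | hju'
  · rw [triggered_of_lt (by omega) (by omega) hjl,
      triggered_of_lt (by omega) (by omega) hjl'] at heq
    exact intervalI_injective (by omega) (by omega) heq
  · exact absurd heq (triggered_of_lt_ne_of_le (by omega) (by omega) hjl hk1' (by omega) hju' hj')
  · exact absurd heq.symm
      (triggered_of_lt_ne_of_le (by omega) (by omega) hjl' hk1 (by omega) hju hj)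
  · have h : intervalI (d - 1) k (j - 2 ^ (k - 1)) =
        intervalI (d - 1) k' (j' - 2 ^ (k' - 1)) := by
      rw [← triggered_of_le_inter_Iic (d := d) (by omega) (by omega) hju hj, heq,
        triggered_of_le_inter_Iic (by omega) (by omega) hju' hj']
    obtain ⟨rfl, hjj⟩ := intervalI_injective (by omega) (by omega) h
    exact ⟨rfl, by omega⟩

/-- For `d ≥ 3` and `w = 2^d`, distinct tree nodes `(k, j)` at depths
`2 ≤ k ≤ d - 1` trigger distinct sets of parity checks: the map `(k, j) ↦ T_{k,j}` is
injective on `{(k, j) : 2 ≤ k ≤ d - 1, j < 2^k}`. -/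
theorem triggered_injective (d : ℕ) (hd : 3 ≤ d) (w : ℕ) (hw : w = 2 ^ d)
    (k j k' j' : ℕ)
    (hk1 : 2 ≤ k) (hk2 : k ≤ d - 1) (hj : j < 2 ^ k)
    (hk1' : 2 ≤ k') (hk2' : k' ≤ d - 1) (hj' : j' < 2 ^ k')
    (heq : triggered w d k j = triggered w d k' j') :
    k = k' ∧ j = j' :=
  triggered_injective_general d w hw k j k' j' hk1 hk2 hj hk1' hk2' hj' heq
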